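/- Robustification inequality for permutation-invariant operators: Let d ≥ 1, n ≥ 1, let S be a nonempty finite set, ρ : S → density matrices on ℂ^d, and fix s : Fin n → S. Let p : S → ℝ be the empirical distribution p(x) := |{k : s k = x}| / n, and let ρ̄ := Σ_x p(x) • ρ_x. Then for every permutation-invariant positive semidefinite matrix B indexed by (Fin n → Fin d), Re(trace(B · ρ̄^{⊗n})) ≥ (2n)^{−|S|} · Re(trace(B · (ρ_{s 1} ⊗ ⋯ ⊗ ρ_{s n}))). -/

import Mathlib

open Matrix Filter
open scoped ComplexOrder

noncomputable section

/-- A density matrix on `ℂ^d`: positive semidefinite with trace one. -/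
def IsDensityMatrix {d : ℕ} (ρ : Matrix (Fin d) (Fin d) ℂ) : Prop :=
  ρ.PosSemidef ∧ ρ.trace = 1

/-- A test: both `P` and `1 - P` are positive semidefinite. -/
def IsTest {ι : Type} [Fintype ι] [DecidableEq ι] (P : Matrix ι ι ℂ) : Prop :=
  P.PosSemidef ∧ ((1 : Matrix ι ι ℂ) - P).PosSemidef

/-- Tensor product of `n` matrices on `ℂ^d`, as a matrix indexed by `Fin n → Fin d`. -/
def tensorProd {d n : ℕ} (ρs : Fin n → Matrix (Fin d) (Fin d) ℂ) :
    Matrix (Fin n → Fin d) (Fin n → Fin d) ℂ :=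
  fun i j => ∏ k, ρs k (i k) (j k)

/-- `n`-fold tensor power of a matrix on `ℂ^d`. -/
def tensorPow {d : ℕ} (ρ : Matrix (Fin d) (Fin d) ℂ) (n : ℕ) :
    Matrix (Fin n → Fin d) (Fin n → Fin d) ℂ :=
  tensorProd fun _ => ρ

/-- Quantum relative entropy `D(ρ‖σ)` (base-2 logarithm) of `ρ` w.r.t. the diagonal density
matrix with diagonal `t`, written using the eigenvalues of `ρ` and its diagonal entries. -/
def qRelEnt {d : ℕ} (ρ : Matrix (Fin d) (Fin d) ℂ) (t : Fin d → ℝ) : ℝ :=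
  if h : ρ.IsHermitian then
    (∑ i, h.eigenvalues i * Real.logb 2 (h.eigenvalues i))
      - ∑ i, (ρ i i).re * Real.logb 2 (t i)
  else 0

/-- Permutation invariance of an operator on `(ℂ^d)^{⊗ n}`. -/
def PermInvariant {d n : ℕ} (A : Matrix (Fin n → Fin d) (Fin n → Fin d) ℂ) : Prop :=
  ∀ π : Equiv.Perm (Fin n), ∀ i j, A (i ∘ π) (j ∘ π) = A i j

/-- The constant `α = 1/(2 ln 2)` from Pinsker's inequality. -/
def alphaC : ℝ := 1 / (2 * Real.log 2)

/-- The error term `Θ(n, ε, d, σ)`, where `t` is the diagonal of `σ`. -/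
def Theta {d : ℕ} (n : ℕ) (ε : ℝ) (t : Fin d → ℝ) : ℝ :=
  ((d : ℝ) ^ 2 / (n : ℝ)) * Real.logb 2 (2 * (n : ℝ))
    + ε * Real.logb 2 ((d : ℝ) / ε)
    + (d : ℝ) * ε * ⨆ i, |Real.logb 2 (t i)|

/-!
Expanding `ρ̄^{⊗n} = ∑_t (∏_k p(t_k)) ρ_{t_1} ⊗ ⋯ ⊗ ρ_{t_n}` writes `tr(B ρ̄^{⊗n})` as a
nonnegative combination of the numbers `tr(B ρ_t) ≥ 0`, and permutation invariance of `B` makes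
`tr(B ρ_t)` depend only on the type of `t`. Keeping only the type class of `s`, it remains to bound
its probability under the i.i.d. law `p^{⊗n}` from below. Because `p` is the empirical
distribution of `s`, the type class of `s` is the most likely one, and there are at most
`(n + 1)^{|S|} ≤ (2n)^{|S|}` type classes.
-/

open Finset
open scoped Nat

/-- `m ↦ a ^ m / m !` is maximal at `m = a`. -/
theorem Nat.factorial_mul_pow_le_factorial_mul_pow (a b : ℕ) : a ! * a ^ b ≤ b ! * a ^ a := by
  rcases le_total a b with h | h
  · calc a ! * a ^ b = a ! * a ^ (b - a) * a ^ a := by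
          rw [mul_assoc, ← pow_add, Nat.sub_add_cancel h]
      _ ≤ b ! * a ^ a := by gcongr; exact Nat.factorial_mul_pow_sub_le_factorial h
  · calc a ! * a ^ b = b ! * a.descFactorial (a - b) * a ^ b := by
          rw [← Nat.factorial_mul_descFactorial (Nat.sub_le a b), Nat.sub_sub_self h]
      _ ≤ b ! * a ^ (a - b) * a ^ b := by gcongr; exact Nat.descFactorial_le_pow _ _
      _ = b ! * a ^ a := by rw [mul_assoc, ← pow_add, Nat.sub_add_cancel h]

open scoped MatrixOrder in
lemma Matrix.PosSemidef.trace_mul_nonneg {𝕜 ι : Type*} [RCLike 𝕜] [Fintype ι] [DecidableEq ι]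
    {B C : Matrix ι ι 𝕜} (hB : B.PosSemidef) (hC : C.PosSemidef) : 0 ≤ (B * C).trace := by
  obtain ⟨R, rfl⟩ := CStarAlgebra.nonneg_iff_eq_star_mul_self.mp hC.nonneg
  rw [star_eq_conjTranspose, ← Matrix.mul_assoc, trace_mul_comm, ← Matrix.mul_assoc]
  exact (hB.mul_mul_conjTranspose_same R).trace_nonneg

section TypeClass

variable {S : Type*} [Fintype S] [DecidableEq S] {n : ℕ}

/-- The type of a sequence, in the sense of the method of types. -/
def typeCount (t : Fin n → S) (x : S) : ℕ := #{k | t k = x}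

lemma sum_typeCount (t : Fin n → S) : ∑ x, typeCount t x = n := by
  simpa [typeCount] using
    (card_eq_sum_card_fiberwise (f := t) (s := univ) (t := univ) (by simp)).symm

omit [Fintype S] in
lemma typeCount_eq_iff_exists_perm {t u : Fin n → S} :
    typeCount t = typeCount u ↔ ∃ π : Equiv.Perm (Fin n), t = u ∘ π := by
  constructor
  · intro h
    have e : ∀ x, {k // t k = x} ≃ {k // u k = x} := fun x =>
      Fintype.equivOfCardEq (by simpa [Fintype.card_subtype, typeCount] using congrFun h x)
    exact ⟨Equiv.ofFiberEquiv e, funext fun k => (Equiv.ofFiberEquiv_map e k).symm⟩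
  · rintro ⟨π, rfl⟩
    funext x
    exact card_equiv π (by simp)

def typeClass (u : Fin n → S) : Finset (Fin n → S) :=
  {t | typeCount t = typeCount u}

lemma card_typeClass_mul_prod_factorial (u : Fin n → S) :
    #(typeClass u) * ∏ x, (typeCount u x)! = n ! := by
  let G := (Equiv.Perm (Fin n))ᵈᵐᵃ
  have horbit : MulAction.orbit G u = {t | typeCount t = typeCount u} := by
    ext t
    simp only [MulAction.mem_orbit_iff, Set.mem_ofPred_eq, typeCount_eq_iff_exists_perm]
    constructor
    · rintro ⟨g, rfl⟩
      exact ⟨DomMulAct.mk.symm g, rfl⟩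
    · rintro ⟨π, rfl⟩
      exact ⟨DomMulAct.mk π, rfl⟩
  have hstab : Nat.card (MulAction.stabilizer G u) = ∏ x, (typeCount u x)! := by
    rw [← Nat.card_congr (Equiv.subtypeEquiv (p := fun g : Equiv.Perm (Fin n) => u ∘ g = u)
      DomMulAct.mk fun _ => Iff.rfl), Nat.card_eq_fintype_card, DomMulAct.stabilizer_card]
    simp [typeCount, Fintype.card_subtype]
  rw [← Set.ncard_coe_finset, typeClass, coe_filter_univ, ← horbit, ← MulAction.index_stabilizer,
    ← hstab, Subgroup.index_mul_card, Nat.card_congr DomMulAct.mk.symm, Nat.card_perm, Nat.card_fin]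

lemma card_image_typeCount_le :
    #(univ.image (typeCount : (Fin n → S) → S → ℕ)) ≤ (n + 1) ^ Fintype.card S := by
  calc _ ≤ #(Fintype.piFinset fun _ : S => range (n + 1)) := by
        refine card_le_card fun _ h => ?_
        obtain ⟨t, -, rfl⟩ := mem_image.mp h
        simp only [Fintype.mem_piFinset, mem_range, Nat.lt_succ_iff]
        exact fun x => (card_filter_le _ _).trans (by simp)
    _ = _ := by simp

lemma prod_comp_eq_prod_pow_typeCount {M : Type*} [CommMonoid M] (f : S → M)
    (t : Fin n → S) : ∏ k, f (t k) = ∏ x, f x ^ typeCount t x := by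
  rw [← prod_fiberwise univ t]
  exact prod_congr rfl fun x _ => by
    rw [prod_congr rfl fun k hk => by rw [(mem_filter.mp hk).2], prod_const]; rfl

lemma sum_typeClass_prod {R : Type*} [CommSemiring R] (f : S → R) (u : Fin n → S) :
    ∑ t ∈ typeClass u, ∏ k, f (t k) = #(typeClass u) * ∏ x, f x ^ typeCount u x := by
  rw [sum_congr rfl fun t ht => by rw [prod_comp_eq_prod_pow_typeCount, (mem_filter.mp ht).2],
    sum_const, nsmul_eq_mul]

lemma card_typeClass_mul_prod_pow_le (u v : Fin n → S) :
    #(typeClass v) * ∏ x, typeCount u x ^ typeCount v x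
      ≤ #(typeClass u) * ∏ x, typeCount u x ^ typeCount u x := by
  set c := typeCount u
  set m := typeCount v
  refine Nat.le_of_mul_le_mul_right (c := (∏ x, (m x)!) * ∏ x, (c x)!) ?_ (by positivity)
  calc (#(typeClass v) * ∏ x, c x ^ m x) * ((∏ x, (m x)!) * ∏ x, (c x)!)
      = (#(typeClass v) * ∏ x, (m x)!) * ∏ x, ((c x)! * c x ^ m x) := by
        rw [prod_mul_distrib]; ring
    _ ≤ (#(typeClass u) * ∏ x, (c x)!) * ∏ x, ((m x)! * c x ^ c x) := by
        rw [card_typeClass_mul_prod_factorial, card_typeClass_mul_prod_factorial]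
        exact Nat.mul_le_mul_left _
          (prod_le_prod' fun x _ => Nat.factorial_mul_pow_le_factorial_mul_pow _ _)
    _ = (#(typeClass u) * ∏ x, c x ^ c x) * ((∏ x, (m x)!) * ∏ x, (c x)!) := by
        rw [prod_mul_distrib]; ring

def empirical (u : Fin n → S) (x : S) : ℝ := typeCount u x / n

omit [Fintype S] in
lemma empirical_nonneg (u : Fin n → S) (x : S) : 0 ≤ empirical u x := by
  unfold empirical
  positivity

lemma sum_empirical (hn : n ≠ 0) (u : Fin n → S) : ∑ x, empirical u x = 1 := by
  simp [empirical, ← sum_div, ← Nat.cast_sum, sum_typeCount, hn]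

lemma sum_typeClass_prod_empirical_le (u v : Fin n → S) :
    ∑ t ∈ typeClass v, ∏ k, empirical u (t k) ≤ ∑ t ∈ typeClass u, ∏ k, empirical u (t k) := by
  have hweight : ∀ w : Fin n → S, ∑ t ∈ typeClass w, ∏ k, empirical u (t k)
      = (#(typeClass w) * ∏ x, typeCount u x ^ typeCount w x : ℕ) / (n : ℝ) ^ n := by
    intro w
    rw [sum_typeClass_prod]
    simp only [empirical, div_pow, prod_div_distrib, prod_pow_eq_pow_sum, sum_typeCount]
    push_cast
    ring
  rw [hweight, hweight]
  gcongr ?_ / _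
  exact_mod_cast card_typeClass_mul_prod_pow_le u v

lemma inv_le_sum_typeClass_prod_empirical (hn : n ≠ 0) (u : Fin n → S) :
    ((n + 1 : ℝ) ^ Fintype.card S)⁻¹ ≤ ∑ t ∈ typeClass u, ∏ k, empirical u (t k) := by
  set W := fun t : Fin n → S => ∏ k, empirical u (t k)
  have h : 1 ≤ (n + 1 : ℝ) ^ Fintype.card S * ∑ t ∈ typeClass u, W t := calc
    1 = ∑ t, W t := by rw [← Fintype.sum_pow, sum_empirical hn, one_pow]
    _ = ∑ w ∈ univ.image typeCount, ∑ t ∈ univ with typeCount t = w, W t :=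
        (sum_fiberwise_of_maps_to (fun t _ => mem_image_of_mem _ (mem_univ t)) W).symm
    _ ≤ #(univ.image typeCount) • ∑ t ∈ typeClass u, W t := by
        refine sum_le_card_nsmul _ _ _ fun _ hw => ?_
        obtain ⟨v, -, rfl⟩ := mem_image.mp hw
        exact sum_typeClass_prod_empirical_le u v
    _ ≤ (n + 1 : ℝ) ^ Fintype.card S * ∑ t ∈ typeClass u, W t := by
        rw [nsmul_eq_mul]
        gcongr
        · exact sum_nonneg fun t _ => prod_nonneg fun k _ => empirical_nonneg u _
        · exact_mod_cast card_image_typeCount_le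
  rwa [inv_le_iff_one_le_mul₀' (by positivity)]

end TypeClass

section TensorProduct

variable {d n : ℕ}

lemma conjTranspose_tensorProd (A : Fin n → Matrix (Fin d) (Fin d) ℂ) :
    (tensorProd A)ᴴ = tensorProd fun k => (A k)ᴴ := by
  ext i j
  simp [tensorProd, conjTranspose_apply, star_prod]

lemma tensorProd_mul (A C : Fin n → Matrix (Fin d) (Fin d) ℂ) :
    tensorProd A * tensorProd C = tensorProd fun k => A k * C k := by
  ext i j
  simp only [tensorProd, mul_apply, Fintype.prod_sum, prod_mul_distrib]

open scoped MatrixOrder in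
lemma tensorProd_posSemidef {A : Fin n → Matrix (Fin d) (Fin d) ℂ}
    (hA : ∀ k, (A k).PosSemidef) : (tensorProd A).PosSemidef := by
  choose R hR using fun k => CStarAlgebra.nonneg_iff_eq_star_mul_self.mp (hA k).nonneg
  have h : tensorProd A = (tensorProd R)ᴴ * tensorProd R := by
    rw [conjTranspose_tensorProd, tensorProd_mul]
    exact congrArg tensorProd (funext hR)
  exact h ▸ posSemidef_conjTranspose_mul_self _

lemma tensorPow_sum_smul {S : Type*} [Fintype S] (c : S → ℝ)
    (ρ : S → Matrix (Fin d) (Fin d) ℂ) :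
    tensorPow (∑ x, c x • ρ x) n
      = ∑ t : Fin n → S, (∏ k, c (t k)) • tensorProd fun k => ρ (t k) := by
  ext i j
  simp only [tensorPow, tensorProd, Matrix.sum_apply, Matrix.smul_apply, Complex.real_smul,
    Fintype.prod_sum, prod_mul_distrib, Complex.ofReal_prod]

lemma PermInvariant.trace_mul_tensorProd_comp_perm
    {B : Matrix (Fin n → Fin d) (Fin n → Fin d) ℂ} (hB : PermInvariant B)
    (A : Fin n → Matrix (Fin d) (Fin d) ℂ) (π : Equiv.Perm (Fin n)) :
    (B * tensorProd (A ∘ π)).trace = (B * tensorProd A).trace := by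
  let e : (Fin n → Fin d) ≃ (Fin n → Fin d) := π.arrowCongr (Equiv.refl _)
  have hB' : B.submatrix e e = B := funext₂ (hB π.symm)
  have hA : (tensorProd A).submatrix e e = tensorProd (A ∘ π) := by
    ext i j
    simpa [tensorProd, e] using
      (Equiv.prod_comp π fun k => A k (i (π.symm k)) (j (π.symm k))).symm
  calc (B * tensorProd (A ∘ π)).trace
      = (B.submatrix e e * (tensorProd A).submatrix e e).trace := by rw [hB', hA]
    _ = (B * tensorProd A).trace := by
        rw [submatrix_mul_equiv]
        exact Equiv.sum_comp e fun i => (B * tensorProd A) i i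

end TensorProduct

theorem robustification_general (d n : ℕ) (hn : 1 ≤ n)
    (S : Type) [Fintype S] [DecidableEq S]
    (ρ : S → Matrix (Fin d) (Fin d) ℂ) (hρ : ∀ x, IsDensityMatrix (ρ x))
    (s : Fin n → S)
    (B : Matrix (Fin n → Fin d) (Fin n → Fin d) ℂ)
    (hBinv : PermInvariant B) (hB : B.PosSemidef) :
    ((2 * (n : ℝ)) ^ (Fintype.card S))⁻¹ *
        ((B * tensorProd fun k => ρ (s k)).trace).re ≤
      ((B * tensorPow
          (∑ x : S, (((Finset.univ.filter fun k => s k = x).card : ℝ) / (n : ℝ)) • ρ x)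
          n).trace).re := by
  let W (t : Fin n → S) : ℝ := ∏ k, empirical s (t k)
  let T (t : Fin n → S) : ℝ := (B * tensorProd fun k => ρ (t k)).trace.re
  have hW (t) : 0 ≤ W t := prod_nonneg fun k _ => empirical_nonneg s _
  have hT (t) : 0 ≤ T t :=
    (Complex.nonneg_iff.mp (hB.trace_mul_nonneg (tensorProd_posSemidef fun k => (hρ (t k)).1))).1
  have hT_typeClass : ∀ t ∈ typeClass s, T t = T s := by
    intro t ht
    obtain ⟨π, rfl⟩ := typeCount_eq_iff_exists_perm.mp (mem_filter.mp ht).2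
    exact congrArg Complex.re (hBinv.trace_mul_tensorProd_comp_perm (fun k => ρ (s k)) π)
  have hclass : ((2 * (n : ℝ)) ^ Fintype.card S)⁻¹ ≤ ∑ t ∈ typeClass s, W t := by
    refine le_trans ?_ (inv_le_sum_typeClass_prod_empirical (by omega) s)
    gcongr
    norm_cast
    omega
  calc ((2 * (n : ℝ)) ^ Fintype.card S)⁻¹ * T s
      ≤ (∑ t ∈ typeClass s, W t) * T s := mul_le_mul_of_nonneg_right hclass (hT s)
    _ = ∑ t ∈ typeClass s, W t * T t := by
        rw [sum_mul]
        exact sum_congr rfl fun t ht => by rw [hT_typeClass t ht]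
    _ ≤ ∑ t, W t * T t :=
        sum_le_sum_of_subset_of_nonneg (subset_univ _) fun t _ _ => mul_nonneg (hW t) (hT t)
    _ = _ := by
        rw [tensorPow_sum_smul, Matrix.mul_sum, trace_sum, Complex.re_sum]
        simp only [Matrix.mul_smul, trace_smul, Complex.real_smul, Complex.re_ofReal_mul]
        rfl

/-- **Robustification inequality for permutation-invariant operators.** -/
theorem robustification (d n : ℕ) (hd : 1 ≤ d) (hn : 1 ≤ n)
    (S : Type) [Fintype S] [Nonempty S] [DecidableEq S]
    (ρ : S → Matrix (Fin d) (Fin d) ℂ) (hρ : ∀ x, IsDensityMatrix (ρ x))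
    (s : Fin n → S)
    (B : Matrix (Fin n → Fin d) (Fin n → Fin d) ℂ)
    (hBinv : PermInvariant B) (hB : B.PosSemidef) :
    ((2 * (n : ℝ)) ^ (Fintype.card S))⁻¹ *
        ((B * tensorProd fun k => ρ (s k)).trace).re ≤
      ((B * tensorPow
          (∑ x : S, (((Finset.univ.filter fun k => s k = x).card : ℝ) / (n : ℝ)) • ρ x)
          n).trace).re :=
  robustification_general d n hn S ρ hρ s B hBinv hB
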